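/- Let K be a positive integer, A a finite set of attributes with |A| ≥ 2, and let a recommendation list be a K-tuple of items each carrying an attribute in A. Suppose a greedy procedure iterates over a (possibly infinite) ordered stream of items containing at least τ items of each attribute (where 0 ≤ τ ≤ K/|A|), maintaining a list R and counters c_a = |{i ∈ R : a_i = a}|, and adds the current item j to R if and only if Σ_{a ∈ A} max(0, τ − c'_a) ≤ K − |R'| holds after the hypothetical insertion (where c', R' denote post-insertion counts), terminating when |R| = K. Then at termination, for every attribute a ∈ A, the final list contains at least τ items with attribute a; equivalently the least ratio min_a |{i ∈ R : a_i = a}|/K is at least τ/K. -/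
import Mathlib


/-- The greedy post-processing procedure of PrivateRank: iterate over the ordered
stream of items (represented by their attributes), maintaining a list `R`;
add the current item `j` iff `∑_{a ∈ A} max(0, τ − c'_a) ≤ K − |R'|` holds after the
hypothetical insertion (natural subtraction `τ - count` equals `max (0, τ - count)`);
terminate as soon as `|R| = K`. -/
def greedyFair {α : Type*} [DecidableEq α] (A : Finset α) (τ K : ℕ) :
    List α → List α → List α
  | [], R => R
  | j :: s, R =>
    if R.length = K then R
    else if ∑ a ∈ A, (τ - (j :: R).count a) ≤ K - (R.length + 1) then
      greedyFair A τ K s (j :: R)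
    else greedyFair A τ K s R

lemma greedyFair_aux {α : Type*} [DecidableEq α] (A : Finset α) (τ K : ℕ) :
    ∀ (s R : List α), (∀ x ∈ s, x ∈ A) → R.length ≤ K →
    (∑ a ∈ A, (τ - R.count a)) ≤ K - R.length →
    (∀ a ∈ A, τ ≤ R.count a + s.count a) →
    ∀ a ∈ A, τ ≤ (greedyFair A τ K s R).count a
  | [], R, hs, hlen, hfeas, hcov, a, ha => by
      rw [greedyFair]
      simpa using hcov a ha
  | j :: s, R, hs, hlen, hfeas, hcov, a, ha => by
      rw [greedyFair]
      by_cases hRK : R.length = K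
      · rw [if_pos hRK]
        have h0 : (∑ b ∈ A, (τ - R.count b)) = 0 := by omega
        have := Finset.sum_eq_zero_iff.mp h0 a ha
        omega
      · rw [if_neg hRK]
        have hjA : j ∈ A := hs j (by simp)
        by_cases hcond : ∑ b ∈ A, (τ - (j :: R).count b) ≤ K - (R.length + 1)
        · rw [if_pos hcond]
          refine greedyFair_aux A τ K s (j :: R) ?_ ?_ ?_ ?_ a ha
          · intro x hx; exact hs x (List.mem_cons_of_mem _ hx)
          · simp only [List.length_cons]; omega
          · simpa using hcond
          · intro b hb
            have := hcov b hb
            by_cases hbj : j = b <;> simp [List.count_cons, hbj] at this ⊢ <;> omega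
        · rw [if_neg hcond]
          have hkey : τ ≤ R.count j := by
            by_contra hlt
            push_neg at hlt
            apply hcond
            have hsplit : ∑ b ∈ A, (τ - (j :: R).count b) + 1
                = ∑ b ∈ A, (τ - R.count b) := by
              rw [← Finset.add_sum_erase _ _ hjA, ← Finset.add_sum_erase _ (fun b => τ - R.count b) hjA]
              have hcount : (j :: R).count j = R.count j + 1 := by simp
              have hrest : ∀ b ∈ A.erase j, (τ - (j :: R).count b) = τ - R.count b := by
                intro b hb
                have hne : j ≠ b := (Finset.ne_of_mem_erase hb).symm
                simp [List.count_cons, hne]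
              rw [Finset.sum_congr rfl hrest, hcount]
              omega
            omega
          refine greedyFair_aux A τ K s R ?_ hlen hfeas ?_ a ha
          · intro x hx; exact hs x (List.mem_cons_of_mem _ hx)
          · intro b hb
            have := hcov b hb
            by_cases hbj : j = b
            · subst hbj; omega
            · simp [List.count_cons, hbj] at this ⊢; omega

/-- PrivateRank fairness (Theorem 4.1): if the stream contains at least `τ` items of each
attribute and `0 ≤ τ ≤ K/|A|`, then the final list contains at least `τ` items of each
attribute; equivalently its least ratio is at least `τ/K`. -/
theorem stmt0 {α : Type*} [DecidableEq α] (A : Finset α) (hA : 2 ≤ A.card)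
    (K : ℕ) (hK : 0 < K) (τ : ℕ) (hτ : τ * A.card ≤ K)
    (l : List α) (hmem : ∀ x ∈ l, x ∈ A) (hl : ∀ a ∈ A, τ ≤ l.count a) :
    ∀ a ∈ A, τ ≤ (greedyFair A τ K l []).count a := by
  intro a ha
  refine greedyFair_aux A τ K l [] hmem (by simp) ?_ ?_ a ha
  · simp only [List.count_nil, Nat.sub_zero, Finset.sum_const, smul_eq_mul,
      List.length_nil, Nat.sub_zero]
    have := Nat.mul_comm A.card τ
    omega
  · intro b hb
    simpa using hl b hb
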